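/- arXiv:2112.00066 — 5 statements merged into one kernel-verified Lean document; each statement's English description precedes it below -/
import Mathlib

section
/- For non-negative reals a, b with b ≠ a + 1, for every positive integer n: ∑_{j=1}^n Γ(j+a)/Γ(j+b) = (1/(b-a-1)) · (Γ(a+1)/Γ(b) − Γ(n+a+1)/Γ(n+b)). -/
open Finset

/-! With `F j = Γ(j + a) / Γ(j + b - 1)`, the functional equation `Γ(x + 1) = x Γ(x)` gives
`(a + 1 - b) Γ(j + a) / Γ(j + b) = F (j + 1) - F j`, so the sum telescopes to
`(F (n + 1) - F 1) / (a + 1 - b)`. -/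

/-- Holds for every `t`, also at the poles: Mathlib's `Γ` vanishes at `0, -1, -2, …`. -/
theorem Real.Gamma_div_Gamma_mul_sub {s : ℝ} (hs : s ≠ 0) (t : ℝ) :
    Real.Gamma s / Real.Gamma t * (s + 1 - t) =
      Real.Gamma (s + 1) / Real.Gamma t - Real.Gamma s / Real.Gamma (t - 1) := by
  rw [Real.Gamma_add_one hs]
  rcases eq_or_ne (t - 1) 0 with ht | ht
  · obtain rfl : t = 1 := by linarith
    simp only [Real.Gamma_one, sub_self, Real.Gamma_zero, div_zero]
    ring
  · have hrec : Real.Gamma t = (t - 1) * Real.Gamma (t - 1) := by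
      rw [← Real.Gamma_add_one ht, sub_add_cancel]
    rw [hrec]
    rcases eq_or_ne (Real.Gamma (t - 1)) 0 with h | h
    · simp [h]
    field_simp
    ring

theorem gamma_ratio_sum_general (a b : ℝ) (ha : 0 ≤ a) (hab : b ≠ a + 1)
    (n : ℕ) :
    ∑ j ∈ Finset.Icc 1 n, Real.Gamma (j + a) / Real.Gamma (j + b)
      = (1 / (b - a - 1)) *
        (Real.Gamma (a + 1) / Real.Gamma b - Real.Gamma (n + a + 1) / Real.Gamma (n + b)) := by
  set F : ℕ → ℝ := fun j => Real.Gamma (j + a) / Real.Gamma (j + b - 1)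
  have hstep : ∀ j ∈ Icc 1 n,
      Real.Gamma (j + a) / Real.Gamma (j + b) * (a + 1 - b) = F (j + 1) - F j := by
    intro j hj
    have hja : (j : ℝ) + a ≠ 0 := by
      have : (1 : ℝ) ≤ j := by exact_mod_cast (mem_Icc.1 hj).1
      linarith
    convert Real.Gamma_div_Gamma_mul_sub hja (j + b) using 2 <;> push_cast [F] <;> ring_nf
  have htel : (∑ j ∈ Icc 1 n, Real.Gamma (j + a) / Real.Gamma (j + b)) * (a + 1 - b)
      = F (n + 1) - F 1 := by
    rw [sum_mul, sum_congr rfl hstep, ← Ico_add_one_right_eq_Icc, sum_Ico_sub _ (by omega)]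
  have hF1 : F 1 = Real.Gamma (a + 1) / Real.Gamma b := by
    simp only [F, Nat.cast_one, add_comm (1 : ℝ), add_sub_cancel_right]
  have hFn : F (n + 1) = Real.Gamma (n + a + 1) / Real.Gamma (n + b) := by
    simp only [F, Nat.cast_succ]
    ring_nf
  have hba : b - a - 1 ≠ 0 := fun h => hab (by linarith)
  rw [hF1, hFn] at htel
  field_simp
  linear_combination -htel

/-- Gamma ratio summation identity: for non-negative reals `a`, `b` with `b ≠ a + 1`,
`∑_{j=1}^n Γ(j+a)/Γ(j+b) = (1/(b-a-1)) (Γ(a+1)/Γ(b) − Γ(n+a+1)/Γ(n+b))`. -/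
theorem gamma_ratio_sum (a b : ℝ) (ha : 0 ≤ a) (hb : 0 ≤ b) (hab : b ≠ a + 1)
    (n : ℕ) (hn : 1 ≤ n) :
    ∑ j ∈ Finset.Icc 1 n, Real.Gamma (j + a) / Real.Gamma (j + b)
      = (1 / (b - a - 1)) *
        (Real.Gamma (a + 1) / Real.Gamma b - Real.Gamma (n + a + 1) / Real.Gamma (n + b)) :=
  gamma_ratio_sum_general a b ha hab n
end

section
/- For non-negative reals a, b with b ≠ a + 1 and b ≠ a + 2, for every positive integer n: ∑_{j=1}^n j·Γ(j+a)/Γ(j+b) = (1/((b-a-1)(b-a-2))) · (Γ(a+1)/Γ(b-1) − Γ(n+a+1)/Γ(n+b-1)) − (n/(b-a-1)) · Γ(n+a+1)/Γ(n+b). -/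
open Finset

lemma one_div_Gamma_eq (x : ℝ) : 1 / Real.Gamma x = x / Real.Gamma (x + 1) := by
  rcases eq_or_ne x 0 with h | h
  · simp [h, Real.Gamma_zero]
  · rw [Real.Gamma_add_one h, div_mul_eq_div_div, div_self h]

/-- Gamma ratio summation identity with linear weight: for non-negative reals `a`, `b`
with `b ≠ a + 1` and `b ≠ a + 2`, for every positive integer `n`,
`∑_{j=1}^n j·Γ(j+a)/Γ(j+b) = (1/((b-a-1)(b-a-2))) (Γ(a+1)/Γ(b-1) − Γ(n+a+1)/Γ(n+b-1))
  − (n/(b-a-1)) Γ(n+a+1)/Γ(n+b)`. -/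
theorem gamma_ratio_sum_weighted (a b : ℝ) (ha : 0 ≤ a) (hb : 0 ≤ b)
    (hab1 : b ≠ a + 1) (hab2 : b ≠ a + 2) (n : ℕ) (hn : 1 ≤ n) :
    ∑ j ∈ Finset.Icc 1 n, (j : ℝ) * (Real.Gamma (j + a) / Real.Gamma (j + b))
      = (1 / ((b - a - 1) * (b - a - 2))) *
          (Real.Gamma (a + 1) / Real.Gamma (b - 1)
            - Real.Gamma (n + a + 1) / Real.Gamma (n + b - 1))
        - ((n : ℝ) / (b - a - 1)) * (Real.Gamma (n + a + 1) / Real.Gamma (n + b)) := by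
  have h1 : b - a - 1 ≠ 0 := by intro h; apply hab1; linarith
  have h2 : b - a - 2 ≠ 0 := by intro h; apply hab2; linarith
  induction n, hn using Nat.le_induction with
  | base =>
    rw [Finset.Icc_self, Finset.sum_singleton]
    push_cast
    have hgb1 : Real.Gamma (b + 1) ≠ 0 := (Real.Gamma_pos_of_pos (by linarith)).ne'
    have ga : Real.Gamma (1 + a + 1) = (1 + a) * Real.Gamma (1 + a) :=
      Real.Gamma_add_one (by linarith)
    have e1 : Real.Gamma (a + 1) / Real.Gamma (b - 1)
        = Real.Gamma (a + 1) * ((b - 1) * (b / Real.Gamma (b + 1))) := by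
      rw [div_eq_mul_one_div, one_div_Gamma_eq, show b - 1 + 1 = b by ring,
        div_eq_mul_one_div (b-1), one_div_Gamma_eq]
    have e2 : Real.Gamma (1 + a + 1) / Real.Gamma (1 + b - 1)
        = Real.Gamma (1 + a + 1) * (b / Real.Gamma (b + 1)) := by
      rw [show (1:ℝ) + b - 1 = b by ring, div_eq_mul_one_div, one_div_Gamma_eq]
    have e3 : Real.Gamma (1 + a) / Real.Gamma (1 + b)
        = Real.Gamma (1 + a) * (1 / Real.Gamma (b + 1)) := by
      rw [show (1:ℝ) + b = b + 1 by ring, div_eq_mul_one_div]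
    have e4 : Real.Gamma (1 + a + 1) / Real.Gamma (1 + b)
        = Real.Gamma (1 + a + 1) * (1 / Real.Gamma (b + 1)) := by
      rw [show (1:ℝ) + b = b + 1 by ring, div_eq_mul_one_div]
    rw [e1, e2, e3, e4, ga]
    field_simp
    ring
  | succ n hn ih =>
    rw [Finset.sum_Icc_succ_top (by omega : 1 ≤ n + 1), ih]
    push_cast
    set m := (n : ℝ) with hm
    have hm1 : (1:ℝ) ≤ m := by rw [hm]; exact_mod_cast hn
    have hB : Real.Gamma (m + b) ≠ 0 := (Real.Gamma_pos_of_pos (by linarith)).ne'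
    have hmb : m + b ≠ 0 := by positivity
    have g2 : Real.Gamma (m + 1 + a + 1) = (m + a + 1) * Real.Gamma (m + a + 1) := by
      rw [show m + 1 + a + 1 = (m + a + 1) + 1 by ring]
      exact Real.Gamma_add_one (by positivity)
    have g3 : Real.Gamma (m + 1 + b) = (m + b) * Real.Gamma (m + b) := by
      rw [show m + 1 + b = (m + b) + 1 by ring]
      exact Real.Gamma_add_one hmb
    have g4 : Real.Gamma (m + a + 1) / Real.Gamma (m + b - 1)
        = Real.Gamma (m + a + 1) * ((m + b - 1) / Real.Gamma (m + b)) := by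
      rw [div_eq_mul_one_div, one_div_Gamma_eq, show m + b - 1 + 1 = m + b by ring]
    have g5 : Real.Gamma (m + 1 + a) = Real.Gamma (m + a + 1) := by ring_nf
    have g6 : Real.Gamma (m + 1 + b - 1) = Real.Gamma (m + b) := by ring_nf
    rw [g2, g3, g4, g5, g6]
    field_simp
    ring
end

section
/- If a real sequence (b_n)_{n≥1} satisfies b_{n+1} = (1 + β/n)·b_n + c for all n ≥ 1, where β > 0, β ≠ 1, c is a constant, and b_1 = c, then for all n ≥ 1: b_n = (c/((β-1)·Γ(β))) · Γ(n+β)/Γ(n) − c·n/(β-1). -/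
/-- Explicit solution of the recursion `b_{n+1} = (1 + β/n) b_n + c` with `b_1 = c`:
`b_n = (c/((β-1) Γ(β))) Γ(n+β)/Γ(n) − c n/(β-1)`. -/
theorem recursion_solution_const (β c : ℝ) (hβ : 0 < β) (hβ1 : β ≠ 1) (b : ℕ → ℝ)
    (hb1 : b 1 = c)
    (hrec : ∀ n : ℕ, 1 ≤ n → b (n + 1) = (1 + β / n) * b n + c) :
    ∀ n : ℕ, 1 ≤ n →
      b n = (c / ((β - 1) * Real.Gamma β)) * (Real.Gamma (n + β) / Real.Gamma n)
        - c * n / (β - 1) := by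
  have hβ0 : Real.Gamma β ≠ 0 := (Real.Gamma_pos_of_pos hβ).ne'
  have hβ1' : β - 1 ≠ 0 := sub_ne_zero.mpr hβ1
  intro n hn
  induction n, hn using Nat.le_induction with
  | base =>
    rw [hb1]
    have h1 : ((1 : ℕ) : ℝ) + β = β + 1 := by push_cast; ring
    rw [h1, Real.Gamma_add_one hβ.ne', Nat.cast_one, Real.Gamma_one]
    field_simp
  | succ n hn ih =>
    have hn0 : (0 : ℝ) < (n : ℝ) := by exact_mod_cast hn
    have hΓn : Real.Gamma n ≠ 0 := (Real.Gamma_pos_of_pos hn0).ne'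
    have hnβ : (0 : ℝ) < (n : ℝ) + β := by linarith
    have hΓnβ : Real.Gamma ((n : ℝ) + β) ≠ 0 := (Real.Gamma_pos_of_pos hnβ).ne'
    rw [hrec n hn, ih]
    have e1 : ((n + 1 : ℕ) : ℝ) + β = ((n : ℝ) + β) + 1 := by push_cast; ring
    have e2 : ((n + 1 : ℕ) : ℝ) = (n : ℝ) + 1 := by push_cast; ring
    rw [e1, e2, Real.Gamma_add_one hnβ.ne', Real.Gamma_add_one hn0.ne']
    field_simp
    ring
end

section
/- If a sequence (b_n)_{n≥1} of positive reals satisfies b_{n+1} ≤ (1 + c/n^β)·b_n + c/n^β for all n ≥ 1, with β > 1, c > 0, and b_1 ≤ c, then (b_n) is bounded: there exists M such that b_n ≤ M for all n. -/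
/-- If a sequence of positive reals satisfies `b_{n+1} ≤ (1 + c/n^β) b_n + c/n^β` with
`β > 1`, `c > 0` and `b_1 ≤ c`, then the sequence is bounded. -/
theorem recursive_inequality_bounded (β c : ℝ) (hβ : 1 < β) (hc : 0 < c) (b : ℕ → ℝ)
    (hpos : ∀ n : ℕ, 1 ≤ n → 0 < b n) (hb1 : b 1 ≤ c)
    (hrec : ∀ n : ℕ, 1 ≤ n → b (n + 1) ≤ (1 + c / (n : ℝ) ^ β) * b n + c / (n : ℝ) ^ β) :
    ∃ M : ℝ, ∀ n : ℕ, 1 ≤ n → b n ≤ M := by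
  set d : ℕ → ℝ := fun k => c / (k : ℝ) ^ β with hd
  have hdnn : ∀ k, 0 ≤ d k := fun k =>
    div_nonneg hc.le (Real.rpow_nonneg (Nat.cast_nonneg k) β)
  have hsum : Summable d := by
    have h1 : Summable fun k : ℕ => ((k : ℝ) ^ β)⁻¹ :=
      (Real.summable_nat_rpow_inv).2 hβ
    simpa [hd, div_eq_mul_inv] using h1.mul_left c
  set S : ℝ := ∑' k, d k with hS
  refine ⟨(c + 1) * Real.exp S - 1, ?_⟩
  have key : ∀ n : ℕ, 1 ≤ n → b n ≤ (c + 1) * Real.exp (∑ k ∈ Finset.range n, d k) - 1 := by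
    intro n hn
    induction n with
    | zero => omega
    | succ m ih =>
      rcases Nat.eq_or_lt_of_le hn with h1 | h1
      · -- m + 1 = 1, i.e. m = 0
        have hm : m = 0 := by omega
        subst hm
        have : d 0 = 0 := by
          simp [hd, Real.zero_rpow (by linarith : β ≠ 0)]
        simp [this]
        linarith
      · have hm : 1 ≤ m := by omega
        have ihm := ih hm
        have hr := hrec m hm
        have hexp : (1 + d m) ≤ Real.exp (d m) := by linarith [Real.add_one_le_exp (d m)]
        have hA : (0:ℝ) ≤ (c + 1) * Real.exp (∑ k ∈ Finset.range m, d k) := by positivity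
        have h2 : b (m + 1) ≤ (1 + d m) * ((c + 1) * Real.exp (∑ k ∈ Finset.range m, d k)) - 1 := by
          have hdm : 0 ≤ d m := hdnn m
          calc b (m + 1) ≤ (1 + d m) * b m + d m := hr
            _ ≤ (1 + d m) * ((c + 1) * Real.exp (∑ k ∈ Finset.range m, d k) - 1) + d m := by
                nlinarith [hpos m hm]
            _ = (1 + d m) * ((c + 1) * Real.exp (∑ k ∈ Finset.range m, d k)) - 1 := by ring
        have h3 : (1 + d m) * ((c + 1) * Real.exp (∑ k ∈ Finset.range m, d k))
            ≤ Real.exp (d m) * ((c + 1) * Real.exp (∑ k ∈ Finset.range m, d k)) := by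
          exact mul_le_mul_of_nonneg_right hexp hA
        calc b (m + 1) ≤ _ := h2
          _ ≤ Real.exp (d m) * ((c + 1) * Real.exp (∑ k ∈ Finset.range m, d k)) - 1 := by
              linarith
          _ = (c + 1) * Real.exp (∑ k ∈ Finset.range (m + 1), d k) - 1 := by
              rw [Finset.sum_range_succ, Real.exp_add]; ring
  intro n hn
  have := key n hn
  have hle : (∑ k ∈ Finset.range n, d k) ≤ S := Summable.sum_le_tsum _ (fun k _ => hdnn k) hsum
  have : (c + 1) * Real.exp (∑ k ∈ Finset.range n, d k) ≤ (c + 1) * Real.exp S := by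
    apply mul_le_mul_of_nonneg_left (Real.exp_le_exp.2 hle) (by linarith)
  linarith [key n hn]
end

section
/- In the elephant random walk with m_2 < ∞, the second moments of the centered walk S̃_n = S_n − n·m_1 satisfy the recursion E(S̃_{n+1}^2) = (1 + 2α/n)·E(S̃_n^2) + M_2 with E(S̃_1^2) = M_2, where M_2 = m_2 − m_1^2. -/
open MeasureTheory ProbabilityTheory Filter

/-- A realization of the randomness driving an elephant random walk with memory
parameter `α` on a probability space `(Ω, μ)`: an i.i.d. sequence `ξ` of step samples
and an independent i.i.d. sequence `U` of uniform random variables on `(0,1]`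
(all jointly independent), used both for the `α`-coin and for the uniform choice of
a past step. -/
structure ERW {Ω : Type*} [MeasurableSpace Ω] (μ : Measure Ω) (α : ℝ) where
  ξ : ℕ → Ω → ℝ
  U : ℕ → Ω → ℝ
  ξ_meas : ∀ n, Measurable (ξ n)
  U_meas : ∀ n, Measurable (U n)
  indep : iIndepFun (Sum.elim ξ U) μ
  ξ_ident : ∀ n, μ.map (ξ n) = μ.map (ξ 1)
  U_unif : ∀ n, μ.map (U n) = volume.restrict (Set.Ioc (0 : ℝ) 1)

namespace ERW

variable {Ω : Type*} [MeasurableSpace Ω] {μ : Measure Ω} {α : ℝ}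

/-- The steps of the elephant random walk: `X 1 = ξ 1`, and `X (n+1)` repeats the
uniformly chosen past step `X ⌈n U/α⌉` when the uniform variable `U = U (n+1)`
satisfies `U < α` (which happens with probability `α`, and conditionally on this
event `⌈n U/α⌉` is uniform on `{1,…,n}`), while `X (n+1)` is the fresh sample
`ξ (n+1)` when `U ≥ α` (probability `1-α`). -/
noncomputable def X (E : ERW μ α) : ℕ → Ω → ℝ
  | 0 => E.ξ 0
  | 1 => E.ξ 1
  | (n + 2) => fun ω =>
      if E.U (n + 2) ω < α then
        E.X (min (n + 1) (max 1 ⌈(n + 1 : ℝ) * E.U (n + 2) ω / α⌉₊)) ω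
      else E.ξ (n + 2) ω
  decreasing_by exact Nat.lt_succ_of_le (min_le_left _ _)

/-- The position of the elephant random walk after `n` steps. -/
noncomputable def S (E : ERW μ α) (n : ℕ) (ω : Ω) : ℝ :=
  ∑ k ∈ Finset.Icc 1 n, E.X k ω

/-- The natural filtration `F n = σ(X 1, …, X n)` of the elephant random walk. -/
noncomputable def F (E : ERW μ α) (n : ℕ) : MeasurableSpace Ω :=
  ⨆ k ∈ Set.Icc 1 n, MeasurableSpace.comap (E.X k) inferInstance

/-- The mean `m₁ = E ξ₁` of the step distribution. -/
noncomputable def m1 (E : ERW μ α) : ℝ := ∫ ω, E.ξ 1 ω ∂μ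

end ERW

/-!
Conditionally on the past, the step `X (n+1)` is, with probability `α/n` each, a copy of one of
`X 1, …, X n`, and with probability `1 - α` a fresh sample independent of the past. Hence every
`X n` has the law of `ξ 1`, and with `S̃ n = S n - n m₁` the cross term is
`E[S̃ n (X (n+1) - m₁)] = (α/n) ∑ k ≤ n, E[S̃ n (X k - m₁)] = (α/n) E[S̃ n ²]`: the fresh sample
contributes nothing since it is centered and independent of `S̃ n`. Expanding
`S̃ (n+1)² = (S̃ n + (X (n+1) - m₁))²` gives the recursion.
-/

open MeasureTheory ProbabilityTheory Set

lemma volume_real_eq_of_Ioo_subset_of_subset_Icc {s : Set ℝ} {a b : ℝ} (hab : a ≤ b)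
    (hIoo : Ioo a b ⊆ s) (hIcc : s ⊆ Icc a b) : volume.real s = b - a := by
  have : volume s = ENNReal.ofReal (b - a) :=
    le_antisymm (Real.volume_Icc ▸ measure_mono hIcc) (Real.volume_Ioo ▸ measure_mono hIoo)
  rw [measureReal_def, this, ENNReal.toReal_ofReal (sub_nonneg.2 hab)]

namespace ERW

-- Clamped as in the definition of `X`; the clamp is inactive when `0 < u < α`.
noncomputable def recallIndex (α : ℝ) (n : ℕ) (u : ℝ) : ℕ := min n (max 1 ⌈(n : ℝ) * u / α⌉₊)

def recallSet (α : ℝ) (n k : ℕ) : Set ℝ := {u | u < α ∧ recallIndex α n u = k}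

lemma measurable_recallIndex (α : ℝ) (n : ℕ) : Measurable (recallIndex α n) :=
  measurable_const.min (measurable_const.max ((measurable_id.const_mul _).div_const _).nat_ceil)

lemma measurableSet_recallSet (α : ℝ) (n k : ℕ) : MeasurableSet (recallSet α n k) :=
  measurableSet_Iio.inter (measurable_recallIndex α n (measurableSet_singleton k))

lemma recallIndex_mem_Icc {n : ℕ} (hn : 1 ≤ n) (α u : ℝ) : recallIndex α n u ∈ Finset.Icc 1 n :=
  Finset.mem_Icc.2 ⟨le_min hn (le_max_left _ _), min_le_left _ _⟩

lemma recallIndex_eq_iff {α u : ℝ} {n k : ℕ} (hn : 1 ≤ n) (hk : 1 ≤ k) (hu : 0 < u)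
    (huα : u < α) : recallIndex α n u = k ↔ α * (k - 1) / n < u ∧ u ≤ α * k / n := by
  have hα : 0 < α := hu.trans huα
  have hn' : (0 : ℝ) < n := by exact_mod_cast hn
  have hceil : recallIndex α n u = ⌈(n : ℝ) * u / α⌉₊ := by
    have h1 : 1 ≤ ⌈(n : ℝ) * u / α⌉₊ := Nat.one_le_ceil_iff.2 (by positivity)
    have h2 : ⌈(n : ℝ) * u / α⌉₊ ≤ n := Nat.ceil_le.2 ((div_le_iff₀ hα).2 (by nlinarith))
    rw [recallIndex, max_eq_right h1, min_eq_right h2]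
  rw [hceil, Nat.ceil_eq_iff (by omega), Nat.cast_sub hk, Nat.cast_one, lt_div_iff₀ hα,
    div_le_iff₀ hα, div_lt_iff₀ hn', le_div_iff₀ hn']
  constructor <;> rintro ⟨h1, h2⟩ <;> constructor <;> linarith

lemma volume_real_recallSet_inter_Ioc {α : ℝ} (hα : α ∈ Icc (0 : ℝ) 1) {n k : ℕ}
    (hk : k ∈ Finset.Icc 1 n) : volume.real (recallSet α n k ∩ Ioc 0 1) = α / n := by
  obtain ⟨hk1, hkn⟩ := Finset.mem_Icc.1 hk
  have hn : (0 : ℝ) < n := by exact_mod_cast hk1.trans hkn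
  have hk1' : (1 : ℝ) ≤ k := by exact_mod_cast hk1
  have hkn' : (k : ℝ) ≤ n := by exact_mod_cast hkn
  have ha : 0 ≤ α * (k - 1) / n := div_nonneg (mul_nonneg hα.1 (by linarith)) hn.le
  have hb : α * k / n ≤ α := (div_le_iff₀ hn).2 (by nlinarith [hα.1])
  have hab : α * (k - 1) / n ≤ α * k / n := by gcongr; exacts [hα.1, by linarith]
  convert volume_real_eq_of_Ioo_subset_of_subset_Icc hab ?_ ?_ using 1
  · ring
  · rintro u ⟨hau, hub⟩
    have hu : 0 < u := ha.trans_lt hau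
    have huα : u < α := hub.trans_le hb
    exact ⟨⟨huα, (recallIndex_eq_iff (hk1.trans hkn) hk1 hu huα).2 ⟨hau, hub.le⟩⟩, hu,
      (hub.le.trans hb).trans hα.2⟩
  · rintro u ⟨⟨huα, hidx⟩, hu, -⟩
    obtain ⟨h1, h2⟩ := (recallIndex_eq_iff (hk1.trans hkn) hk1 hu huα).1 hidx
    exact ⟨h1.le, h2⟩

lemma volume_real_Ici_inter_Ioc {α : ℝ} (hα : α ∈ Icc (0 : ℝ) 1) :
    volume.real (Ici α ∩ Ioc 0 1) = 1 - α :=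
  volume_real_eq_of_Ioo_subset_of_subset_Icc hα.2
    (fun _ hu => ⟨hu.1.le, hα.1.trans_lt hu.1, hu.2.le⟩) (fun _ hu => ⟨hu.1, hu.2.2⟩)

variable {Ω : Type*} [MeasurableSpace Ω] {μ : Measure Ω} {α : ℝ} (E : ERW μ α)

lemma X_zero : E.X 0 = E.ξ 0 := by rw [ERW.X]

lemma X_one : E.X 1 = E.ξ 1 := by rw [ERW.X]

lemma X_succ {n : ℕ} (hn : 1 ≤ n) (ω : Ω) : E.X (n + 1) ω =
    if E.U (n + 1) ω < α then E.X (recallIndex α n (E.U (n + 1) ω)) ω else E.ξ (n + 1) ω := by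
  obtain ⟨m, rfl⟩ : ∃ m, n = m + 1 := ⟨n - 1, by omega⟩
  rw [ERW.X]
  norm_num [recallIndex]

lemma comp_X_succ_eq_sum {n : ℕ} (hn : 1 ≤ n) (φ : ℝ → ℝ) (ω : Ω) :
    φ (E.X (n + 1) ω) =
      ∑ k ∈ Finset.Icc 1 n, (recallSet α n k).indicator 1 (E.U (n + 1) ω) * φ (E.X k ω)
        + (Ici α).indicator 1 (E.U (n + 1) ω) * φ (E.ξ (n + 1) ω) := by
  rw [E.X_succ hn]
  by_cases h : E.U (n + 1) ω < α
  · simp [h, recallSet, indicator_apply, recallIndex_mem_Icc hn]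
  · simp [h, recallSet, indicator_apply]

lemma mul_comp_X_succ_eq_sum {n : ℕ} (hn : 1 ≤ n) (f : Ω → ℝ) (φ : ℝ → ℝ) (ω : Ω) :
    f ω * φ (E.X (n + 1) ω) =
      ∑ k ∈ Finset.Icc 1 n, f ω * φ (E.X k ω) * (recallSet α n k).indicator 1 (E.U (n + 1) ω)
        + f ω * ((Ici α).indicator 1 (E.U (n + 1) ω) * φ (E.ξ (n + 1) ω)) := by
  rw [E.comp_X_succ_eq_sum hn φ ω, mul_add, Finset.mul_sum]
  congr 1
  exact Finset.sum_congr rfl fun _ _ => by ring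

lemma S_one : E.S 1 = E.ξ 1 := by
  ext ω
  simp [S, X_one]

lemma S_succ (n : ℕ) (ω : Ω) : E.S (n + 1) ω = E.S n ω + E.X (n + 1) ω :=
  Finset.sum_Icc_succ_top (by omega) _

-- `Sum.elim id id i` is the time of the coordinate `i` of the family `Sum.elim ξ U`.
noncomputable def past (n : ℕ) : MeasurableSpace Ω :=
  ⨆ i ∈ {i : ℕ ⊕ ℕ | Sum.elim id id i ≤ n},
    MeasurableSpace.comap (Sum.elim E.ξ E.U i) inferInstance

noncomputable def future (n : ℕ) : MeasurableSpace Ω :=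
  ⨆ i ∈ {i : ℕ ⊕ ℕ | Sum.elim id id i ≤ n}ᶜ,
    MeasurableSpace.comap (Sum.elim E.ξ E.U i) inferInstance

lemma measurable_sumElim (i : ℕ ⊕ ℕ) : Measurable (Sum.elim E.ξ E.U i) := by
  cases i with
  | inl j => exact E.ξ_meas j
  | inr j => exact E.U_meas j

lemma past_le (n : ℕ) : E.past n ≤ ‹MeasurableSpace Ω› :=
  iSup₂_le fun i _ => (E.measurable_sumElim i).comap_le

lemma measurable_sumElim_past {n : ℕ} {i : ℕ ⊕ ℕ} (hi : Sum.elim id id i ≤ n) :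
    Measurable[E.past n] (Sum.elim E.ξ E.U i) :=
  Measurable.of_comap_le (le_biSup (fun j => MeasurableSpace.comap (Sum.elim E.ξ E.U j) _) hi)

lemma measurable_sumElim_future {n : ℕ} {i : ℕ ⊕ ℕ} (hi : n < Sum.elim id id i) :
    Measurable[E.future n] (Sum.elim E.ξ E.U i) :=
  Measurable.of_comap_le
    (le_biSup (fun j => MeasurableSpace.comap (Sum.elim E.ξ E.U j) _) (not_le.2 hi))

lemma measurable_X_past {k n : ℕ} (hk : k ≤ n) : Measurable[E.past n] (E.X k) := by
  induction k using Nat.strong_induction_on with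
  | _ k ih =>
  match k with
  | 0 => rw [X_zero]; exact E.measurable_sumElim_past (i := .inl 0) hk
  | 1 => rw [X_one]; exact E.measurable_sumElim_past (i := .inl 1) hk
  | j + 2 =>
    have hU : Measurable[E.past n] (E.U (j + 2)) :=
      E.measurable_sumElim_past (i := .inr (j + 2)) hk
    change Measurable[E.past n] fun ω => id (E.X (j + 1 + 1) ω)
    rw [funext (E.comp_X_succ_eq_sum (n := j + 1) (by omega) id)]
    refine (Finset.measurable_sum _ fun i hi => ?_).add ?_
    · obtain ⟨-, hij⟩ := Finset.mem_Icc.1 hi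
      exact ((measurable_one.indicator (measurableSet_recallSet α _ i)).comp hU).mul
        (ih i (by omega) (by omega))
    · exact ((measurable_one.indicator measurableSet_Ici).comp hU).mul
        (E.measurable_sumElim_past (i := .inl (j + 2)) hk)

lemma measurable_X (k : ℕ) : Measurable (E.X k) :=
  (E.measurable_X_past le_rfl).mono (E.past_le k) le_rfl

lemma identDistrib_ξ (n : ℕ) : IdentDistrib (E.ξ n) (E.ξ 1) μ μ :=
  ⟨(E.ξ_meas n).aemeasurable, (E.ξ_meas 1).aemeasurable, E.ξ_ident n⟩

lemma integral_indicator_comp_U (n : ℕ) {A : Set ℝ} (hA : MeasurableSet A) :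
    ∫ ω, A.indicator 1 (E.U n ω) ∂μ = volume.real (A ∩ Ioc 0 1) := by
  rw [← integral_map (E.U_meas n).aemeasurable (measurable_one.indicator hA).aestronglyMeasurable,
    E.U_unif n, integral_indicator_one hA, measureReal_restrict_apply hA]

lemma indepFun_of_measurable_past_of_measurable_future {n : ℕ} {f g : Ω → ℝ}
    (hf : Measurable[E.past n] f) (hg : Measurable[E.future n] g) : IndepFun f g μ :=
  indep_of_indep_of_le_right (indep_of_indep_of_le_left
    (indep_biSup_compl (fun i => (E.measurable_sumElim i).comap_le) E.indep _) hf.comap_le)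
    hg.comap_le

lemma measurable_future_indicator_comp_U_mul_comp_ξ (n : ℕ) {A : Set ℝ}
    (hA : MeasurableSet A) {h : ℝ → ℝ} (hh : Measurable h) :
    Measurable[E.future n] fun ω => A.indicator 1 (E.U (n + 1) ω) * h (E.ξ (n + 1) ω) :=
  ((measurable_one.indicator hA).comp
    (E.measurable_sumElim_future (i := .inr (n + 1)) (by simp))).mul
    (hh.comp (E.measurable_sumElim_future (i := .inl (n + 1)) (by simp)))

lemma integral_mul_indicator_comp_U_mul_comp_ξ {n : ℕ} {f : Ω → ℝ}
    (hf : Measurable[E.past n] f) {A : Set ℝ} (hA : MeasurableSet A) {h : ℝ → ℝ}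
    (hh : Measurable h) :
    ∫ ω, f ω * (A.indicator 1 (E.U (n + 1) ω) * h (E.ξ (n + 1) ω)) ∂μ
      = (∫ ω, f ω ∂μ) * (volume.real (A ∩ Ioc 0 1) * ∫ ω, h (E.ξ 1 ω) ∂μ) := by
  have hg : Measurable (A.indicator (1 : ℝ → ℝ)) := measurable_one.indicator hA
  have hUξ : IndepFun (E.U (n + 1)) (E.ξ (n + 1)) μ :=
    E.indep.indepFun (i := .inr (n + 1)) (j := .inl (n + 1)) (by simp)
  have hindep := E.indepFun_of_measurable_past_of_measurable_future (μ := μ) hf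
    (E.measurable_future_indicator_comp_U_mul_comp_ξ n hA hh)
  rw [hindep.integral_fun_mul_eq_mul_integral
      (hf.mono (E.past_le n) le_rfl).aestronglyMeasurable
      ((hg.comp (E.U_meas _)).mul (hh.comp (E.ξ_meas _))).aestronglyMeasurable,
    hUξ.integral_fun_comp_mul_comp (E.U_meas _).aemeasurable (E.ξ_meas _).aemeasurable
      hg.aestronglyMeasurable hh.aestronglyMeasurable,
    E.integral_indicator_comp_U _ hA]
  exact congrArg _ (congrArg _ ((E.identDistrib_ξ _).comp hh).integral_eq)

lemma integrable_mul_indicator_comp_U {n : ℕ} {f : Ω → ℝ} (hf : Integrable f μ) {A : Set ℝ}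
    (hA : MeasurableSet A) : Integrable (fun ω => f ω * A.indicator 1 (E.U n ω)) μ :=
  hf.mul_bdd ((measurable_one.indicator hA).comp (E.U_meas n)).aestronglyMeasurable
    (c := 1) (ae_of_all _ fun ω => by by_cases h : E.U n ω ∈ A <;> simp [h])

lemma integrable_mul_indicator_comp_U_mul_comp_ξ {n : ℕ} {f : Ω → ℝ}
    (hf : Measurable[E.past n] f) (hfi : Integrable f μ) {A : Set ℝ} (hA : MeasurableSet A)
    {h : ℝ → ℝ} (hh : Measurable h) (hhi : Integrable (fun ω => h (E.ξ 1 ω)) μ) :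
    Integrable (fun ω => f ω * (A.indicator 1 (E.U (n + 1) ω) * h (E.ξ (n + 1) ω))) μ := by
  have hg : Measurable (A.indicator (1 : ℝ → ℝ)) := measurable_one.indicator hA
  have hhi' : Integrable (fun ω => h (E.ξ (n + 1) ω)) μ :=
    ((E.identDistrib_ξ _).comp hh).integrable_iff.2 hhi
  exact (E.indepFun_of_measurable_past_of_measurable_future hf
    (E.measurable_future_indicator_comp_U_mul_comp_ξ n hA hh)).integrable_mul hfi
    (hhi'.bdd_mul (hg.comp (E.U_meas _)).aestronglyMeasurable
      (c := 1) (ae_of_all _ fun ω => by by_cases h : E.U (n + 1) ω ∈ A <;> simp [h]))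

lemma integrable_mul_comp_X_succ {n : ℕ} (hn : 1 ≤ n) {f : Ω → ℝ}
    (hf : Measurable[E.past n] f) (hfi : Integrable f μ) {φ : ℝ → ℝ} (hφ : Measurable φ)
    (hφi : Integrable (fun ω => φ (E.ξ 1 ω)) μ)
    (hfX : ∀ k ∈ Finset.Icc 1 n, Integrable (fun ω => f ω * φ (E.X k ω)) μ) :
    Integrable (fun ω => f ω * φ (E.X (n + 1) ω)) μ := by
  simp_rw [E.mul_comp_X_succ_eq_sum hn f φ]
  exact (integrable_finsetSum _ fun k hk =>
    E.integrable_mul_indicator_comp_U (hfX k hk) (measurableSet_recallSet α n k)).add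
    (E.integrable_mul_indicator_comp_U_mul_comp_ξ hf hfi measurableSet_Ici hφ hφi)

section IsProbabilityMeasure

variable [IsProbabilityMeasure μ]

lemma integral_mul_indicator_comp_U {n : ℕ} {f : Ω → ℝ} (hf : Measurable[E.past n] f)
    {A : Set ℝ} (hA : MeasurableSet A) :
    ∫ ω, f ω * A.indicator 1 (E.U (n + 1) ω) ∂μ = (∫ ω, f ω ∂μ) * volume.real (A ∩ Ioc 0 1) := by
  simpa using E.integral_mul_indicator_comp_U_mul_comp_ξ hf hA (measurable_const (a := (1 : ℝ)))

lemma integral_mul_comp_X_succ (hα : α ∈ Icc (0 : ℝ) 1) {n : ℕ} (hn : 1 ≤ n) {f : Ω → ℝ}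
    (hf : Measurable[E.past n] f) (hfi : Integrable f μ) {φ : ℝ → ℝ} (hφ : Measurable φ)
    (hφi : Integrable (fun ω => φ (E.ξ 1 ω)) μ)
    (hfX : ∀ k ∈ Finset.Icc 1 n, Integrable (fun ω => f ω * φ (E.X k ω)) μ) :
    ∫ ω, f ω * φ (E.X (n + 1) ω) ∂μ
      = α / n * ∑ k ∈ Finset.Icc 1 n, ∫ ω, f ω * φ (E.X k ω) ∂μ
        + (1 - α) * (∫ ω, f ω ∂μ) * ∫ ω, φ (E.ξ 1 ω) ∂μ := by
  simp_rw [E.mul_comp_X_succ_eq_sum hn f φ]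
  have hrecall : ∀ k ∈ Finset.Icc 1 n, Integrable
      (fun ω => f ω * φ (E.X k ω) * (recallSet α n k).indicator 1 (E.U (n + 1) ω)) μ :=
    fun k hk => E.integrable_mul_indicator_comp_U (hfX k hk) (measurableSet_recallSet α n k)
  rw [integral_add (integrable_finsetSum _ hrecall)
      (E.integrable_mul_indicator_comp_U_mul_comp_ξ hf hfi measurableSet_Ici hφ hφi),
    integral_finsetSum _ hrecall, Finset.mul_sum,
    E.integral_mul_indicator_comp_U_mul_comp_ξ hf measurableSet_Ici hφ,
    volume_real_Ici_inter_Ioc hα]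
  congr 1
  · refine Finset.sum_congr rfl fun k hk => ?_
    have hfXk : Measurable[E.past n] fun ω => f ω * φ (E.X k ω) :=
      hf.mul (hφ.comp (E.measurable_X_past (Finset.mem_Icc.1 hk).2))
    rw [E.integral_mul_indicator_comp_U hfXk (measurableSet_recallSet α n k),
      volume_real_recallSet_inter_Ioc hα hk, mul_comm]
  · ring

lemma integrable_comp_X_and_integral_comp_X (hα : α ∈ Icc (0 : ℝ) 1) {φ : ℝ → ℝ}
    (hφ : Measurable φ) (hφi : Integrable (fun ω => φ (E.ξ 1 ω)) μ) {n : ℕ} (hn : 1 ≤ n) :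
    Integrable (fun ω => φ (E.X n ω)) μ ∧ ∫ ω, φ (E.X n ω) ∂μ = ∫ ω, φ (E.ξ 1 ω) ∂μ := by
  induction n using Nat.strong_induction_on with
  | _ n ih =>
  obtain rfl | ⟨m, hm, rfl⟩ : n = 1 ∨ ∃ m, 1 ≤ m ∧ n = m + 1 := by
    rcases n with _ | _ | m <;> simp_all
  · rw [X_one]
    exact ⟨hφi, rfl⟩
  have hpast (k) (hk : k ∈ Finset.Icc 1 m) :=
    ih k (by have := (Finset.mem_Icc.1 hk).2; omega) (Finset.mem_Icc.1 hk).1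
  have hone : Measurable[E.past m] fun _ : Ω => (1 : ℝ) := measurable_const
  have hfX (k) (hk : k ∈ Finset.Icc 1 m) : Integrable (fun ω => 1 * φ (E.X k ω)) μ := by
    simpa using (hpast k hk).1
  refine ⟨by simpa using E.integrable_mul_comp_X_succ hm hone (integrable_const _) hφ hφi hfX, ?_⟩
  have h := E.integral_mul_comp_X_succ hα hm hone (integrable_const _) hφ hφi hfX
  simp only [one_mul, integral_const, probReal_univ, smul_eq_mul] at h
  rw [h, Finset.sum_congr rfl fun k hk => (hpast k hk).2, Finset.sum_const, Nat.card_Icc,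
    nsmul_eq_mul]
  have : (m : ℝ) ≠ 0 := by positivity
  field_simp
  push_cast
  ring

lemma memLp_X (hα : α ∈ Icc (0 : ℝ) 1) (hint : Integrable (fun ω => E.ξ 1 ω ^ 2) μ) {k : ℕ}
    (hk : 1 ≤ k) : MemLp (E.X k) 2 μ :=
  (memLp_two_iff_integrable_sq (E.measurable_X k).aestronglyMeasurable).2
    (E.integrable_comp_X_and_integral_comp_X hα (measurable_id.pow_const 2) hint hk).1

lemma memLp_S_sub (hα : α ∈ Icc (0 : ℝ) 1) (hint : Integrable (fun ω => E.ξ 1 ω ^ 2) μ)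
    (n : ℕ) (c : ℝ) : MemLp (fun ω => E.S n ω - c) 2 μ :=
  (memLp_finsetSum _ fun _ hk => E.memLp_X hα hint (Finset.mem_Icc.1 hk).1).sub (memLp_const c)

lemma integral_S_sub_mul_X_succ_sub (hα : α ∈ Icc (0 : ℝ) 1)
    (hint : Integrable (fun ω => E.ξ 1 ω ^ 2) μ) {n : ℕ} (hn : 1 ≤ n) :
    ∫ ω, (E.S n ω - n * E.m1) * (E.X (n + 1) ω - E.m1) ∂μ
      = α / n * ∫ ω, (E.S n ω - n * E.m1) ^ 2 ∂μ := by
  have hS := E.memLp_S_sub hα hint n (n * E.m1)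
  have hSpast : Measurable[E.past n] fun ω => E.S n ω - n * E.m1 :=
    (Finset.measurable_sum _ fun k hk => E.measurable_X_past (Finset.mem_Icc.1 hk).2).sub_const _
  have hξ : Integrable (E.ξ 1) μ := by
    simpa [X_one] using (E.memLp_X hα hint le_rfl).integrable one_le_two
  have hcentered : ∫ ω, E.ξ 1 ω - E.m1 ∂μ = 0 := by
    simp [integral_sub hξ (integrable_const _), m1]
  have hcross (k) (hk : k ∈ Finset.Icc 1 n) :
      Integrable (fun ω => (E.S n ω - n * E.m1) * (E.X k ω - E.m1)) μ :=
    hS.integrable_mul ((E.memLp_X hα hint (Finset.mem_Icc.1 hk).1).sub (memLp_const _))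
  have hsum (ω) : ∑ k ∈ Finset.Icc 1 n, (E.X k ω - E.m1) = E.S n ω - n * E.m1 := by
    simp [S, Finset.sum_sub_distrib]
  rw [E.integral_mul_comp_X_succ (φ := fun x => x - E.m1) hα hn hSpast (hS.integrable one_le_two)
      (by fun_prop) (hξ.sub (integrable_const _)) hcross,
    hcentered, ← integral_finsetSum _ hcross]
  simp_rw [← Finset.mul_sum, hsum, ← sq]
  ring

lemma integral_S_succ_sub_sq (hα : α ∈ Icc (0 : ℝ) 1)
    (hint : Integrable (fun ω => E.ξ 1 ω ^ 2) μ) {n : ℕ} (hn : 1 ≤ n) :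
    ∫ ω, (E.S (n + 1) ω - (n + 1) * E.m1) ^ 2 ∂μ
      = (1 + 2 * α / n) * ∫ ω, (E.S n ω - n * E.m1) ^ 2 ∂μ + ∫ ω, (E.ξ 1 ω - E.m1) ^ 2 ∂μ := by
  have hS := E.memLp_S_sub hα hint n (n * E.m1)
  have hX : MemLp (fun ω => E.X (n + 1) ω - E.m1) 2 μ :=
    (E.memLp_X hα hint (by omega)).sub (memLp_const _)
  have hξ : Integrable (fun ω => (E.ξ 1 ω - E.m1) ^ 2) μ := by
    simpa [X_one] using ((E.memLp_X hα hint le_rfl).sub (memLp_const E.m1)).integrable_sq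
  have hcross : Integrable (fun ω => 2 * ((E.S n ω - n * E.m1) * (E.X (n + 1) ω - E.m1))) μ :=
    (hS.integrable_mul hX).const_mul 2
  calc ∫ ω, (E.S (n + 1) ω - (n + 1) * E.m1) ^ 2 ∂μ
      = ∫ ω, (E.S n ω - n * E.m1) ^ 2 + 2 * ((E.S n ω - n * E.m1) * (E.X (n + 1) ω - E.m1))
          + (E.X (n + 1) ω - E.m1) ^ 2 ∂μ := by
        congr 1 with ω
        rw [S_succ]
        ring
    _ = ∫ ω, (E.S n ω - n * E.m1) ^ 2 ∂μ
          + 2 * ∫ ω, (E.S n ω - n * E.m1) * (E.X (n + 1) ω - E.m1) ∂μ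
          + ∫ ω, (E.X (n + 1) ω - E.m1) ^ 2 ∂μ := by
        rw [integral_add _ hX.integrable_sq, integral_add hS.integrable_sq hcross,
          integral_const_mul]
        exact hS.integrable_sq.add hcross
    _ = _ := by
        rw [E.integral_S_sub_mul_X_succ_sub hα hint hn,
          (E.integrable_comp_X_and_integral_comp_X (φ := fun x => (x - E.m1) ^ 2) hα
            (by fun_prop) hξ (by omega : 1 ≤ n + 1)).2]
        ring

end IsProbabilityMeasure

end ERW

open ERW in
/-- Recursion for the second moment of the centered elephant random walk
`S̃_n = S_n − n m₁`: `E(S̃_{n+1}²) = (1 + 2α/n) E(S̃_n²) + M₂` with `E(S̃_1²) = M₂`,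
where `M₂ = m₂ − m₁²`. -/
theorem erw_second_moment_recursion {Ω : Type*} [MeasurableSpace Ω] (μ : Measure Ω)
    [IsProbabilityMeasure μ] (α : ℝ) (hα : α ∈ Set.Icc (0 : ℝ) 1)
    (E : ERW μ α) (hint : Integrable (fun ω => (E.ξ 1 ω) ^ 2) μ) :
    let m2 : ℝ := ∫ ω, (E.ξ 1 ω) ^ 2 ∂μ
    let M2 : ℝ := m2 - E.m1 ^ 2
    (∫ ω, (E.S 1 ω - 1 * E.m1) ^ 2 ∂μ) = M2 ∧
    ∀ n : ℕ, 1 ≤ n →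
      (∫ ω, (E.S (n + 1) ω - (n + 1) * E.m1) ^ 2 ∂μ)
        = (1 + 2 * α / n) * (∫ ω, (E.S n ω - n * E.m1) ^ 2 ∂μ) + M2 := by
  intro m2 M2
  have hvar : ∫ ω, (E.ξ 1 ω - E.m1) ^ 2 ∂μ = M2 := by
    have hξ : MemLp (E.ξ 1) 2 μ :=
      (memLp_two_iff_integrable_sq (E.ξ_meas 1).aestronglyMeasurable).2 hint
    have h := variance_eq_sub hξ
    rw [variance_eq_integral hξ.aemeasurable] at h
    exact h
  refine ⟨by simpa [S_one] using hvar, fun n hn => ?_⟩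
  rw [E.integral_S_succ_sub_sq hα hint hn, hvar]
end
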